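/- Let H be a real Hilbert space, T : H → 2^H a maximal monotone operator with s ∈ S := T⁻¹(0), and let (z_n) be generated by (mPPA): z_{n+1} = λ_n u + γ_n z_n + δ_n J_{c_n}(z_n) + e_n, where u, z₀ ∈ H, (λ_n), (γ_n), (δ_n) ⊂ (0,1) with λ_n + γ_n + δ_n = 1, c_n > 0 and e_n ∈ H. Assume a, c ∈ ℕ \ {0} and monotone functions ℓ, E : ℕ → ℕ satisfy: (Q1) λ_n ≤ 1/(k+1) for all n ≥ ℓ(k); (Q3) 1/a ≤ γ_m ≤ 1 − 1/a for all m; (Q4) c_n ≥ 1/c for all n; (Q6) ∑_{i=E(k)+1}^{E(k)+n} ‖e_i‖ ≤ 1/(k+1) for all k, n. Let N₁ ≥ ‖u‖, N₂ ≥ ∑_{i=0}^{E(0)} ‖e_i‖ + 1, N₃ ≥ max{‖u − s‖, ‖z₀ − s‖}, and N₀ := N₂ + N₃. Let (w_n) be such that z_{n+1} = γ_n z_n + (1 − γ_n) w_n, and let χ : ℕ × ℕ^ℕ → ℕ be a monotone functional such that for every k and monotone f there is n ≤ χ(k,f) with ‖w_m − z_m‖ ≤ 1/(k+1) for all m ∈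 [n, n+f(n)]. Then for every k ∈ ℕ and every monotone f : ℕ → ℕ: (i) there is n ≤ χ(k,f) with ‖z_{m+1} − z_m‖ ≤ 1/(k+1) for all m ∈ [n, n+f(n)]; (ii) there is n ≤ max{ μ(k), χ(2a(k+1), f̃_k) } with ‖J_{c_m}(z_m) − z_m‖ ≤ 1/(k+1) for all m ∈ [n, n+f(n)]; (iii) there is n ≤ ξ_χ(k,f) with ‖J_{1/c}(z_m) − z_m‖ ≤ 1/(k+1) for all m ∈ [n, n+f(n)]; where μ(k) := max{ ℓ(4a(k+1)(N₀+N₃)), E(4a(k+1)) + 1 }, f̃_k(m) := μ(k) + f(max{μ(k), m}) and ξ_χ(k,f) := max{ μ(2k+1), χ(4a(k+1), f̃_{2k+1}) }. -/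

import Mathlib

open scoped Pointwise RealInnerProductSpace

/-- A set-valued operator `T : H → Set H` is monotone. -/
def IsMonotoneOp {H : Type*} [NormedAddCommGroup H] [InnerProductSpace ℝ H]
    (T : H → Set H) : Prop :=
  ∀ x x' y y' : H, y ∈ T x → y' ∈ T x' → 0 ≤ ⟪x - x', y - y'⟫

/-- `T` is maximal monotone. -/
def IsMaximalMonotoneOp {H : Type*} [NormedAddCommGroup H] [InnerProductSpace ℝ H]
    (T : H → Set H) : Prop :=
  IsMonotoneOp T ∧ ∀ T' : H → Set H, IsMonotoneOp T' → (∀ x, T x ⊆ T' x) → T' = T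

/-- `J` is the family of resolvents of `T`: `J c = (I + c T)⁻¹` for `c > 0`. -/
def IsResolventFamilyOf {H : Type*} [NormedAddCommGroup H] [InnerProductSpace ℝ H]
    (J : ℝ → H → H) (T : H → Set H) : Prop :=
  ∀ c : ℝ, 0 < c → ∀ x : H, x - J c x ∈ c • T (J c x)

/-- `g ≤* f` : strong majorization for functions `ℕ → ℕ`. -/
def FunMaj (g f : ℕ → ℕ) : Prop := ∀ n : ℕ, ∀ m ≤ n, g m ≤ f n ∧ f m ≤ f n

/-- A functional `Φ : ℕ × ℕ^ℕ → ℕ` is monotone. -/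
def MonotoneFunctional (Φ : ℕ → (ℕ → ℕ) → ℕ) : Prop :=
  ∀ n : ℕ, ∀ f : ℕ → ℕ, ∀ m ≤ n, ∀ g : ℕ → ℕ, FunMaj g f → Φ m g ≤ Φ n f

/-- `μ(k) := max{ℓ(4a(k+1)(N₀+N₃)), E(4a(k+1))+1}`. -/
def muFun (ℓ E : ℕ → ℕ) (a N₀ N₃ k : ℕ) : ℕ :=
  max (ℓ (4*a*(k+1)*(N₀+N₃))) (E (4*a*(k+1)) + 1)

/-- `f̃_k(m) := μ(k) + f(max{μ(k), m})`. -/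
def fTilde (ℓ E : ℕ → ℕ) (a N₀ N₃ k : ℕ) (f : ℕ → ℕ) (m : ℕ) : ℕ :=
  muFun ℓ E a N₀ N₃ k + f (max (muFun ℓ E a N₀ N₃ k) m)

/-- `ξ_χ(k,f) := max{μ(2k+1), χ(4a(k+1), f̃_{2k+1})}`. -/
def xiChi (ℓ E : ℕ → ℕ) (a N₀ N₃ : ℕ) (χ : ℕ → (ℕ → ℕ) → ℕ) (k : ℕ) (f : ℕ → ℕ) : ℕ :=
  max (muFun ℓ E a N₀ N₃ (2*k+1)) (χ (4*a*(k+1)) (fTilde ℓ E a N₀ N₃ (2*k+1) f))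

/-!
Since `z (n+1) - zₙ = (1 - γₙ)(wₙ - zₙ)`, (i) is immediate. Comparing the two expressions for
`z (n+1)` gives `δₙ (J_{cₙ} zₙ - zₙ) = (1 - γₙ)(wₙ - zₙ) - λₙ (u - zₙ) - eₙ`. As `J_{cₙ}` is
nonexpansive towards the zero `s`, the iterates stay within `N₂ + N₃` of `s`; past `μ(k)` the
terms `λₙ ‖u - zₙ‖` and `‖eₙ‖` are below `1/(4a(k+1))` and `δₙ ≥ (2 - γₙ)/(2a)`, so a window on
which `‖wₙ - zₙ‖ ≤ 1/(2a(k+1)+1)` yields (ii). Finally `‖J_l x - x‖ ≤ 2 ‖J_m x - x‖` for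
`l ≤ m` turns (ii) at `2k+1` into (iii).
-/

section Resolvent

variable {H : Type*} [NormedAddCommGroup H] [InnerProductSpace ℝ H]
  {T : H → Set H} {J : ℝ → H → H}

theorem IsResolventFamilyOf.inner_nonneg (hT : IsMonotoneOp T)
    (hJ : IsResolventFamilyOf J T) {c : ℝ} (hc : 0 < c) (x : H) {p y : H} (hy : y ∈ T p) :
    0 ≤ ⟪J c x - p, x - J c x - c • y⟫ := by
  obtain ⟨y', hy', hcy' : c • y' = x - J c x⟩ := hJ c hc x
  rw [← hcy', ← smul_sub, real_inner_smul_right]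
  exact mul_nonneg hc.le (hT _ _ _ _ hy' hy)

theorem IsResolventFamilyOf.norm_sub_le (hT : IsMonotoneOp T)
    (hJ : IsResolventFamilyOf J T) {c : ℝ} (hc : 0 < c) (x : H) {s : H} (hs : (0 : H) ∈ T s) :
    ‖J c x - s‖ ≤ ‖x - s‖ := by
  have h := hJ.inner_nonneg hT hc x hs
  rw [smul_zero, sub_zero, show x - J c x = (x - s) - (J c x - s) by abel, inner_sub_right,
    real_inner_self_eq_norm_sq] at h
  have := real_inner_le_norm (J c x - s) (x - s)
  nlinarith [norm_nonneg (J c x - s), norm_nonneg (x - s)]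

theorem IsResolventFamilyOf.norm_sub_self_le_two_mul (hT : IsMonotoneOp T)
    (hJ : IsResolventFamilyOf J T) {l m : ℝ} (hl : 0 < l) (hlm : l ≤ m) (x : H) :
    ‖J l x - x‖ ≤ 2 * ‖J m x - x‖ := by
  have hm := hl.trans_le hlm
  obtain ⟨y, hy, hmy : m • y = x - J m x⟩ := hJ m hm x
  rw [← norm_neg, neg_sub, ← norm_neg (J m x - x), neg_sub]
  set u := x - J l x
  set v := x - J m x
  have h : 0 ≤ ⟪v - u, m • u - l • v⟫ := by
    have h := mul_nonneg hm.le (hJ.inner_nonneg hT hl x hy)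
    rwa [← real_inner_smul_right, smul_sub, smul_smul, mul_comm, ← smul_smul, hmy,
      show J l x - J m x = v - u by simp only [u, v]; abel] at h
  clear_value u v
  simp only [inner_sub_left, inner_sub_right, real_inner_smul_right, real_inner_self_eq_norm_sq,
    real_inner_comm u v] at h
  -- `h` reads `m ‖u‖² + l ‖v‖² ≤ (m + l) ⟪u, v⟫`, and `(m + l) ⟪u, v⟫ ≤ 2m ‖u‖ ‖v‖`
  have hp : 0 ≤ ⟪u, v⟫ := by nlinarith [sq_nonneg ‖u‖, sq_nonneg ‖v‖]
  have hmu : m * ‖u‖ ^ 2 ≤ 2 * m * (‖u‖ * ‖v‖) := by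
    nlinarith [real_inner_le_norm u v]
  by_contra! huv
  have hu : 0 < ‖u‖ := (mul_nonneg zero_le_two (norm_nonneg v)).trans_lt huv
  nlinarith [mul_pos (mul_pos hm hu) (sub_pos.2 huv)]

end Resolvent

theorem one_div_cast_add_one_le {n k : ℕ} {q : ℝ} (hq : 0 < q) (hn : (n : ℝ) = q * (k + 1)) :
    1 / ((n : ℝ) + 1) ≤ 1 / ((k : ℝ) + 1) / q := by
  rw [div_div, hn]
  exact one_div_le_one_div_of_le (by positivity) (by linarith)

theorem le_of_mul_le_of_add_add_eq_one {A D lam gam del ε W U e x : ℝ} (hA : 2 ≤ A)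
    (hsum : lam + gam + del = 1) (hgam : 1 / A ≤ 1 - gam) (hD : 1 ≤ D) (hε0 : 0 ≤ ε)
    (hε1 : ε ≤ 1) (hlam0 : 0 ≤ lam) (hlam : lam ≤ ε / (4 * A * D)) (hW : W ≤ ε / (2 * A))
    (hU : U ≤ D) (he : e ≤ ε / (4 * A)) (hx : del * x ≤ (1 - gam) * W + lam * U + e) :
    x ≤ ε := by
  have hA0 : 0 < A := by linarith
  have hD0 : 0 < D := by linarith
  have hgam0 : 0 ≤ 1 - gam := (by positivity : (0:ℝ) ≤ 1 / A).trans hgam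
  have hlamU : lam * U ≤ ε / (4 * A) := by
    calc lam * U ≤ ε / (4 * A * D) * D :=
        (mul_le_mul_of_nonneg_left hU hlam0).trans (mul_le_mul_of_nonneg_right hlam hD0.le)
      _ = ε / (4 * A) := by field_simp
  have hlamA : lam ≤ 1 / (4 * A) := by
    refine hlam.trans (div_le_div₀ zero_le_one hε1 (by positivity) ?_)
    nlinarith
  -- `A ≥ 2` makes the resolvent weight `del` dominate `(2 - gam) / (2A)`
  have hweight : (2 - gam) / (2 * A) ≤ del := by
    rw [div_le_iff₀ (by positivity)]
    rw [div_le_iff₀ hA0] at hgam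
    rw [le_div_iff₀ (by positivity)] at hlamA
    nlinarith
  have hrhs : (1 - gam) * W + lam * U + e ≤ ε * ((2 - gam) / (2 * A)) := by
    have := mul_le_mul_of_nonneg_left hW hgam0
    calc (1 - gam) * W + lam * U + e
        ≤ (1 - gam) * (ε / (2 * A)) + ε / (4 * A) + ε / (4 * A) := by linarith
      _ = ε * ((2 - gam) / (2 * A)) := by field_simp; ring
  have hdel : 0 < del := lt_of_lt_of_le (div_pos (by linarith) (by positivity)) hweight
  nlinarith [mul_le_mul_of_nonneg_left hweight hε0]

theorem sum_range_le_add_of_sum_Icc_le {f : ℕ → ℝ} (hf : ∀ i, 0 ≤ f i) {K : ℕ} {B : ℝ}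
    (hB : ∀ n, ∑ i ∈ Finset.Icc (K + 1) (K + n), f i ≤ B) (n : ℕ) :
    ∑ i ∈ Finset.range n, f i ≤ ∑ i ∈ Finset.range (K + 1), f i + B := by
  have hIcc : Finset.Icc (K + 1) (K + n) = Finset.Ico (K + 1) (K + 1 + n) := by
    ext i; simp only [Finset.mem_Icc, Finset.mem_Ico]; omega
  calc ∑ i ∈ Finset.range n, f i ≤ ∑ i ∈ Finset.range (K + 1 + n), f i :=
        Finset.sum_le_sum_of_subset_of_nonneg (Finset.range_mono (by omega)) fun i _ _ => hf i
    _ = ∑ i ∈ Finset.range (K + 1), f i + ∑ i ∈ Finset.Icc (K + 1) (K + n), f i := by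
        rw [hIcc, Finset.sum_range_add_sum_Ico _ (by omega)]
    _ ≤ ∑ i ∈ Finset.range (K + 1), f i + B := by gcongr; exact hB n

theorem le_of_sum_Icc_le {f : ℕ → ℝ} (hf : ∀ i, 0 ≤ f i) {K : ℕ} {B : ℝ}
    (hB : ∀ n, ∑ i ∈ Finset.Icc (K + 1) (K + n), f i ≤ B) {m : ℕ} (hm : K < m) : f m ≤ B :=
  (Finset.single_le_sum (fun i _ => hf i) (by simp only [Finset.mem_Icc]; omega)).trans
    (hB (m - K))

section Iteration

variable {H : Type*} [NormedAddCommGroup H] [NormedSpace ℝ H]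

theorem norm_sub_le_of_eq_smul_add_one_sub_smul {x x' w : H} {g : ℝ} (hg0 : 0 ≤ g) (hg1 : g ≤ 1)
    (h : x' = g • x + (1 - g) • w) : ‖x' - x‖ ≤ ‖w - x‖ := by
  have hx : x' - x = (1 - g) • (w - x) := by rw [h]; module
  rw [hx, norm_smul, Real.norm_of_nonneg (by linarith)]
  exact mul_le_of_le_one_left (norm_nonneg _) (by linarith)

theorem mul_norm_sub_le_of_eq {x y w u e : H} {lam gam del : ℝ}
    (h : lam • u + gam • x + del • y + e = gam • x + (1 - gam) • w)
    (hsum : lam + gam + del = 1) (hlam : 0 ≤ lam) (hgam : gam ≤ 1) (hdel : 0 ≤ del) :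
    del * ‖y - x‖ ≤ (1 - gam) * ‖w - x‖ + lam * ‖u - x‖ + ‖e‖ := by
  have hyx : del • (y - x) = (1 - gam) • (w - x) - lam • (u - x) - e := by
    linear_combination (norm := module) h - hsum • x
  calc del * ‖y - x‖ = ‖(1 - gam) • (w - x) - lam • (u - x) - e‖ := by
        rw [← hyx, norm_smul, Real.norm_of_nonneg hdel]
    _ ≤ ‖(1 - gam) • (w - x)‖ + ‖lam • (u - x)‖ + ‖e‖ :=
        (norm_sub_le _ _).trans (by gcongr; exact norm_sub_le _ _)
    _ = (1 - gam) * ‖w - x‖ + lam * ‖u - x‖ + ‖e‖ := by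
        rw [norm_smul, norm_smul, Real.norm_of_nonneg (by linarith), Real.norm_of_nonneg hlam]

theorem norm_sub_le_of_mPPA_step {x y w u e : H} {lam gam del : ℝ} {a k D : ℕ}
    (h : lam • u + gam • x + del • y + e = gam • x + (1 - gam) • w)
    (hsum : lam + gam + del = 1) (hlam0 : 0 ≤ lam) (hdel0 : 0 ≤ del) (ha : 0 < a)
    (hgam : 1 / (a : ℝ) ≤ gam ∧ gam ≤ 1 - 1 / (a : ℝ)) (hD : 1 ≤ D)
    (hlam : lam ≤ 1 / (((4 * a * (k + 1) * D : ℕ) : ℝ) + 1))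
    (hw : ‖w - x‖ ≤ 1 / (((2 * a * (k + 1) : ℕ) : ℝ) + 1))
    (hu : ‖u - x‖ ≤ D) (he : ‖e‖ ≤ 1 / (((4 * a * (k + 1) : ℕ) : ℝ) + 1)) :
    ‖y - x‖ ≤ 1 / ((k : ℝ) + 1) := by
  have ha0 : (0 : ℝ) < a := by exact_mod_cast ha
  have hA : (2 : ℝ) ≤ a := by
    have h2 : 2 / (a : ℝ) ≤ 1 := by
      linarith [hgam.1.trans hgam.2, show 2 / (a : ℝ) = 1 / a + 1 / a by ring]
    linarith [(div_le_one ha0).1 h2]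
  have hD' : (1 : ℝ) ≤ D := by exact_mod_cast hD
  have hgam1 : gam ≤ 1 := hgam.2.trans (by simp)
  refine le_of_mul_le_of_add_add_eq_one hA hsum (by linarith [hgam.2]) hD' (by positivity)
    (div_le_one_of_le₀ (by simp) (by positivity)) hlam0 ?_ ?_ hu ?_
    (mul_norm_sub_le_of_eq h hsum hlam0 hgam1 hdel0)
  · exact hlam.trans (one_div_cast_add_one_le (by positivity) (by push_cast; ring))
  · exact hw.trans (one_div_cast_add_one_le (by positivity) (by push_cast; ring))
  · exact he.trans (one_div_cast_add_one_le (by positivity) (by push_cast; ring))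

end Iteration

theorem norm_sub_le_add_sum_of_mPPA {H : Type*} [NormedAddCommGroup H] [InnerProductSpace ℝ H]
    {T : H → Set H} {J : ℝ → H → H} {s u : H} {lam gam del cs : ℕ → ℝ} {e z : ℕ → H} {R : ℝ}
    (hT : IsMonotoneOp T) (hJ : IsResolventFamilyOf J T) (hs : (0 : H) ∈ T s)
    (hlam : ∀ n, 0 ≤ lam n) (hgam : ∀ n, 0 ≤ gam n) (hdel : ∀ n, 0 ≤ del n)
    (hsum : ∀ n, lam n + gam n + del n = 1) (hcs : ∀ n, 0 < cs n)
    (hz : ∀ n, z (n + 1) = lam n • u + gam n • z n + del n • J (cs n) (z n) + e n)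
    (hu : ‖u - s‖ ≤ R) (hz0 : ‖z 0 - s‖ ≤ R) (n : ℕ) :
    ‖z n - s‖ ≤ R + ∑ i ∈ Finset.range n, ‖e i‖ := by
  induction n with
  | zero => simpa using hz0
  | succ n ih =>
    have hS : 0 ≤ ∑ i ∈ Finset.range n, ‖e i‖ := Finset.sum_nonneg fun i _ => norm_nonneg _
    have hlamn := hlam n
    have hgamn := hgam n
    have hdeln := hdel n
    have hJn := (hJ.norm_sub_le hT (hcs n) (z n) hs).trans ih
    have hzs : z (n + 1) - s
        = lam n • (u - s) + gam n • (z n - s) + del n • (J (cs n) (z n) - s) + e n := by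
      linear_combination (norm := module) hz n + hsum n • s
    calc ‖z (n + 1) - s‖
        ≤ ‖lam n • (u - s)‖ + ‖gam n • (z n - s)‖ + ‖del n • (J (cs n) (z n) - s)‖ + ‖e n‖ := by
          rw [hzs]; exact norm_add₄_le
      _ ≤ lam n * R + gam n * (R + ∑ i ∈ Finset.range n, ‖e i‖)
            + del n * (R + ∑ i ∈ Finset.range n, ‖e i‖) + ‖e n‖ := by
          simp only [norm_smul, Real.norm_of_nonneg hlamn, Real.norm_of_nonneg hgamn,
            Real.norm_of_nonneg hdeln]
          gcongr
      _ ≤ R + ∑ i ∈ Finset.range (n + 1), ‖e i‖ := by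
          rw [Finset.sum_range_succ]
          linear_combination (R + ∑ i ∈ Finset.range n, ‖e i‖) * hsum n + mul_nonneg hlamn hS

theorem fTilde_monotone {ℓ E f : ℕ → ℕ} {a N₀ N₃ k : ℕ} (hf : Monotone f) :
    Monotone (fTilde ℓ E a N₀ N₃ k f) :=
  fun _ _ h => Nat.add_le_add_left (hf (max_le_max le_rfl h)) _

theorem exists_le_max_muFun_of_fTilde {ℓ E f : ℕ → ℕ} {a N₀ N₃ k b : ℕ} {P Q : ℕ → Prop}
    (hP : ∃ n ≤ b, ∀ m, n ≤ m → m ≤ n + fTilde ℓ E a N₀ N₃ k f n → P m)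
    (hPQ : ∀ m, muFun ℓ E a N₀ N₃ k ≤ m → P m → Q m) :
    ∃ n ≤ max (muFun ℓ E a N₀ N₃ k) b, ∀ m, n ≤ m → m ≤ n + f n → Q m := by
  obtain ⟨n, hnb, hn⟩ := hP
  refine ⟨max (muFun ℓ E a N₀ N₃ k) n, max_le_max le_rfl hnb, fun m hm1 hm2 => ?_⟩
  refine hPQ m ((le_max_left _ _).trans hm1) (hn m ((le_max_right _ _).trans hm1) ?_)
  unfold fTilde
  omega

theorem mPPA_asymptotic_regularity_general
    {H : Type*} [NormedAddCommGroup H] [InnerProductSpace ℝ H]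
    (T : H → Set H) (hT : IsMaximalMonotoneOp T)
    (J : ℝ → H → H) (hJ : IsResolventFamilyOf J T)
    (s : H) (hsS : (0:H) ∈ T s)
    (u : H) (lam gam del cs : ℕ → ℝ) (e : ℕ → H) (z w : ℕ → H)
    (hlam01 : ∀ n, lam n ∈ Set.Ioo (0:ℝ) 1)
    (hgam01 : ∀ n, gam n ∈ Set.Ioo (0:ℝ) 1)
    (hdel01 : ∀ n, del n ∈ Set.Ioo (0:ℝ) 1)
    (hsum1 : ∀ n, lam n + gam n + del n = 1)
    (hcs0 : ∀ n, 0 < cs n)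
    (hmPPA : ∀ n, z (n+1) = lam n • u + gam n • z n + del n • J (cs n) (z n) + e n)
    (a c : ℕ) (ha : 0 < a) (hc : 0 < c)
    (ℓ E : ℕ → ℕ)
    (Q1 : ∀ k n : ℕ, ℓ k ≤ n → lam n ≤ 1 / ((k:ℝ)+1))
    (Q3 : ∀ m : ℕ, 1 / (a:ℝ) ≤ gam m ∧ gam m ≤ 1 - 1 / (a:ℝ))
    (Q4 : ∀ n, 1 / (c:ℝ) ≤ cs n)
    (Q6 : ∀ k n : ℕ, ∑ i ∈ Finset.Icc (E k + 1) (E k + n), ‖e i‖ ≤ 1 / ((k:ℝ)+1))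
    (N₂ N₃ : ℕ)
    (hN₂ : (∑ i ∈ Finset.range (E 0 + 1), ‖e i‖) + 1 ≤ (N₂ : ℝ))
    (hN₃u : ‖u - s‖ ≤ (N₃ : ℝ)) (hN₃z : ‖z 0 - s‖ ≤ (N₃ : ℝ))
    (hw : ∀ n, z (n+1) = gam n • z n + (1 - gam n) • w n)
    (χ : ℕ → (ℕ → ℕ) → ℕ)
    (hχ : ∀ k : ℕ, ∀ f : ℕ → ℕ, Monotone f → ∃ n ≤ χ k f,
      ∀ m : ℕ, n ≤ m → m ≤ n + f n → ‖w m - z m‖ ≤ 1 / ((k:ℝ)+1)) :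
    ∀ k : ℕ, ∀ f : ℕ → ℕ, Monotone f →
      (∃ n ≤ χ k f, ∀ m : ℕ, n ≤ m → m ≤ n + f n →
        ‖z (m+1) - z m‖ ≤ 1 / ((k:ℝ)+1)) ∧
      (∃ n ≤ max (muFun ℓ E a (N₂+N₃) N₃ k)
          (χ (2*a*(k+1)) (fTilde ℓ E a (N₂+N₃) N₃ k f)),
        ∀ m : ℕ, n ≤ m → m ≤ n + f n →
          ‖J (cs m) (z m) - z m‖ ≤ 1 / ((k:ℝ)+1)) ∧
      (∃ n ≤ xiChi ℓ E a (N₂+N₃) N₃ χ k f,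
        ∀ m : ℕ, n ≤ m → m ≤ n + f n →
          ‖J (1 / (c:ℝ)) (z m) - z m‖ ≤ 1 / ((k:ℝ)+1)) := by
  intro k f hf
  have hQ6 : ∀ n, ∑ i ∈ Finset.Icc (E 0 + 1) (E 0 + n), ‖e i‖ ≤ 1 := by simpa using Q6 0
  have hz : ∀ n, ‖z n - s‖ ≤ N₂ + N₃ := fun n => by
    linarith [norm_sub_le_add_sum_of_mPPA hT.1 hJ hsS (fun n => (hlam01 n).1.le)
      (fun n => (hgam01 n).1.le) (fun n => (hdel01 n).1.le) hsum1 hcs0 hmPPA hN₃u hN₃z n,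
      sum_range_le_add_of_sum_Icc_le (fun i => norm_nonneg (e i)) hQ6 n]
  have hN₂1 : 1 ≤ N₂ := by
    exact_mod_cast
      (le_add_of_nonneg_left (Finset.sum_nonneg fun i _ => norm_nonneg (e i))).trans hN₂
  have hres : ∀ k, ∃ n ≤ max (muFun ℓ E a (N₂+N₃) N₃ k)
      (χ (2*a*(k+1)) (fTilde ℓ E a (N₂+N₃) N₃ k f)), ∀ m, n ≤ m → m ≤ n + f n →
        ‖J (cs m) (z m) - z m‖ ≤ 1 / ((k:ℝ)+1) := fun k =>
    exists_le_max_muFun_of_fTilde (hχ _ _ (fTilde_monotone hf)) fun m hm hwm =>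
      norm_sub_le_of_mPPA_step ((hmPPA m).symm.trans (hw m)) (hsum1 m) (hlam01 m).1.le
        (hdel01 m).1.le ha (Q3 m) (by omega) (Q1 _ m ((le_max_left _ _).trans hm)) hwm
        (by push_cast; linarith [norm_sub_le_norm_sub_add_norm_sub u s (z m),
          norm_sub_rev s (z m), hz m])
        (le_of_sum_Icc_le (fun i => norm_nonneg (e i)) (Q6 _) ((le_max_right _ _).trans hm))
  refine ⟨?_, hres k, ?_⟩
  · obtain ⟨n, hn, hwz⟩ := hχ k f hf
    exact ⟨n, hn, fun m hm1 hm2 => (norm_sub_le_of_eq_smul_add_one_sub_smul (hgam01 m).1.le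
      (hgam01 m).2.le (hw m)).trans (hwz m hm1 hm2)⟩
  · obtain ⟨n, hn, hJz⟩ := hres (2 * k + 1)
    have h4a : 2 * a * (2 * k + 1 + 1) = 4 * a * (k + 1) := by ring
    refine ⟨n, by rwa [xiChi, ← h4a], fun m hm1 hm2 => ?_⟩
    calc ‖J (1 / c) (z m) - z m‖ ≤ 2 * ‖J (cs m) (z m) - z m‖ :=
          hJ.norm_sub_self_le_two_mul hT.1 (by positivity) (Q4 m) (z m)
      _ ≤ 2 * (1 / (((2 * k + 1 : ℕ) : ℝ) + 1)) := by gcongr; exact hJz m hm1 hm2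
      _ = 1 / ((k : ℝ) + 1) := by push_cast; field_simp; ring

/-- Proposition 4.3: quantitative asymptotic regularity of the mPPA iteration. -/
theorem mPPA_asymptotic_regularity
    {H : Type*} [NormedAddCommGroup H] [InnerProductSpace ℝ H] [CompleteSpace H]
    (T : H → Set H) (hT : IsMaximalMonotoneOp T)
    (J : ℝ → H → H) (hJ : IsResolventFamilyOf J T)
    (s : H) (hsS : (0:H) ∈ T s)
    (u : H) (lam gam del cs : ℕ → ℝ) (e : ℕ → H) (z w : ℕ → H)
    (hlam01 : ∀ n, lam n ∈ Set.Ioo (0:ℝ) 1)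
    (hgam01 : ∀ n, gam n ∈ Set.Ioo (0:ℝ) 1)
    (hdel01 : ∀ n, del n ∈ Set.Ioo (0:ℝ) 1)
    (hsum1 : ∀ n, lam n + gam n + del n = 1)
    (hcs0 : ∀ n, 0 < cs n)
    (hmPPA : ∀ n, z (n+1) = lam n • u + gam n • z n + del n • J (cs n) (z n) + e n)
    (a c : ℕ) (ha : 0 < a) (hc : 0 < c)
    (ℓ E : ℕ → ℕ) (hℓ : Monotone ℓ) (hE : Monotone E)
    (Q1 : ∀ k n : ℕ, ℓ k ≤ n → lam n ≤ 1 / ((k:ℝ)+1))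
    (Q3 : ∀ m : ℕ, 1 / (a:ℝ) ≤ gam m ∧ gam m ≤ 1 - 1 / (a:ℝ))
    (Q4 : ∀ n, 1 / (c:ℝ) ≤ cs n)
    (Q6 : ∀ k n : ℕ, ∑ i ∈ Finset.Icc (E k + 1) (E k + n), ‖e i‖ ≤ 1 / ((k:ℝ)+1))
    (N₁ N₂ N₃ : ℕ)
    (hN₁ : ‖u‖ ≤ (N₁ : ℝ))
    (hN₂ : (∑ i ∈ Finset.range (E 0 + 1), ‖e i‖) + 1 ≤ (N₂ : ℝ))
    (hN₃u : ‖u - s‖ ≤ (N₃ : ℝ)) (hN₃z : ‖z 0 - s‖ ≤ (N₃ : ℝ))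
    (hw : ∀ n, z (n+1) = gam n • z n + (1 - gam n) • w n)
    (χ : ℕ → (ℕ → ℕ) → ℕ) (hχmono : MonotoneFunctional χ)
    (hχ : ∀ k : ℕ, ∀ f : ℕ → ℕ, Monotone f → ∃ n ≤ χ k f,
      ∀ m : ℕ, n ≤ m → m ≤ n + f n → ‖w m - z m‖ ≤ 1 / ((k:ℝ)+1)) :
    ∀ k : ℕ, ∀ f : ℕ → ℕ, Monotone f →
      (∃ n ≤ χ k f, ∀ m : ℕ, n ≤ m → m ≤ n + f n →
        ‖z (m+1) - z m‖ ≤ 1 / ((k:ℝ)+1)) ∧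
      (∃ n ≤ max (muFun ℓ E a (N₂+N₃) N₃ k)
          (χ (2*a*(k+1)) (fTilde ℓ E a (N₂+N₃) N₃ k f)),
        ∀ m : ℕ, n ≤ m → m ≤ n + f n →
          ‖J (cs m) (z m) - z m‖ ≤ 1 / ((k:ℝ)+1)) ∧
      (∃ n ≤ xiChi ℓ E a (N₂+N₃) N₃ χ k f,
        ∀ m : ℕ, n ≤ m → m ≤ n + f n →
          ‖J (1 / (c:ℝ)) (z m) - z m‖ ≤ 1 / ((k:ℝ)+1)) :=
  mPPA_asymptotic_regularity_general T hT J hJ s hsS u lam gam del cs e z w hlam01 hgam01 hdel01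
    hsum1 hcs0 hmPPA a c ha hc ℓ E Q1 Q3 Q4 Q6 N₂ N₃ hN₂ hN₃u hN₃z hw χ hχ
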